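/- Let H be a (1,1,1)-inseparable bipartite graph (in particular H − e is connected for every edge e) and let G be a bipartite graph with bipartition (X,Y). Then the final graph ⟨G⟩_H of the H-bootstrap process on G is also bipartite with the same bipartition (X,Y). -/
import Mathlib


open SimpleGraph

/-- Adding the edge `{u,v}` to `G` creates a new copy of `H`. -/
def CreatesNewCopy {α β : Type*} (H : SimpleGraph α) (G : SimpleGraph β) (u v : β) : Prop :=
  ∃ φ : H →g (G ⊔ SimpleGraph.fromEdgeSet {s(u, v)}), Function.Injective φ ∧
    ∃ a b, H.Adj a b ∧ ¬ G.Adj (φ a) (φ b)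

/-- One step of the `H`-bootstrap percolation process. -/
def bootStep {α β : Type*} (H : SimpleGraph α) (G : SimpleGraph β) : SimpleGraph β :=
  G ⊔ SimpleGraph.fromEdgeSet {e | ∃ u v : β, e = s(u, v) ∧ CreatesNewCopy H G u v}

/-- The `H`-bootstrap percolation process started at `G`. -/
def bootProcess {α β : Type*} (H : SimpleGraph α) (G : SimpleGraph β) : ℕ → SimpleGraph β
  | 0 => G
  | i + 1 => bootStep H (bootProcess H G i)

/-- The final (stable) graph `⟨G⟩_H` of the `H`-bootstrap process on `G`. -/
noncomputable def bootClosure {α β : Type*} (H : SimpleGraph α) (G : SimpleGraph β) :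
    SimpleGraph β :=
  ⨆ i, bootProcess H G i

/-- The running time `τ_H(G)` of the `H`-bootstrap process on `G`. -/
noncomputable def runningTime {α β : Type*} (H : SimpleGraph α) (G : SimpleGraph β) : ℕ :=
  sInf {t | bootProcess H G t = bootProcess H G (t + 1)}

/-- The maximum running time `M_H(n)` over all `n`-vertex starting graphs. -/
noncomputable def maxRunningTime {α : Type*} (H : SimpleGraph α) (n : ℕ) : ℕ :=
  sSup {t | ∃ G : SimpleGraph (Fin n), runningTime H G = t}

/-- A bipartite graph `H` with bipartition `(A, Aᶜ)` is `(1,1,1)`-inseparable: it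
cannot be disconnected by removing one edge together with at most one vertex from
each partite set. -/
def InsepBip {W : Type*} (H : SimpleGraph W) (A : Set W) : Prop :=
  ∀ e ∈ H.edgeSet, ∀ X' ⊆ A, ∀ Y' ⊆ Aᶜ, X'.ncard ≤ 1 → Y'.ncard ≤ 1 →
    ((H.deleteEdges {e}).induce (X' ∪ Y')ᶜ).Connected

lemma walk_parity {V : Type*} {G : SimpleGraph V} {X : Set V}
    (h : ∀ u v, G.Adj u v → (u ∈ X ↔ v ∉ X)) {x y : V} (p : G.Walk x y) :
    Even p.length ↔ (x ∈ X ↔ y ∈ X) := by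
  induction p with
  | nil => simp
  | cons hadj q ih =>
      have := h _ _ hadj
      rw [SimpleGraph.Walk.length_cons, Nat.even_add_one]
      tauto

lemma step_bip {W V : Type*} (H : SimpleGraph W) (A : Set W)
    (hHbip : ∀ a b, H.Adj a b → (a ∈ A ↔ b ∉ A))
    (hinsep : InsepBip H A)
    (G : SimpleGraph V) (X : Set V)
    (hGbip : ∀ u v, G.Adj u v → (u ∈ X ↔ v ∉ X)) :
    ∀ u v, (bootStep H G).Adj u v → (u ∈ X ↔ v ∉ X) := by
  intro u v huv
  rcases huv with h | h
  · exact hGbip u v h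
  rw [SimpleGraph.fromEdgeSet_adj] at h
  obtain ⟨⟨u', v', hs, φ, hinj, a, b, hab, hnadj⟩, hne⟩ := h
  have hφab : (G ⊔ SimpleGraph.fromEdgeSet {s(u', v')}).Adj (φ a) (φ b) := φ.map_rel hab
  rcases hφab with h | h
  · exact absurd h hnadj
  rw [SimpleGraph.fromEdgeSet_adj] at h
  obtain ⟨hmem, hφne⟩ := h
  simp only [Set.mem_singleton_iff] at hmem
  -- connectivity of H minus the edge s(a,b)
  have hconn := hinsep s(a, b) (H.mem_edgeSet.mpr hab) ∅ (Set.empty_subset _) ∅ (Set.empty_subset _)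
    (by simp) (by simp)
  rw [Set.empty_union, Set.compl_empty] at hconn
  have hreach : (H.deleteEdges {s(a, b)}).Reachable a b := by
    have := hconn.preconnected ⟨a, trivial⟩ ⟨b, trivial⟩
    have := this.map (SimpleGraph.induceUnivIso (H.deleteEdges {s(a, b)})).toHom
    exact this
  obtain ⟨p⟩ := hreach
  -- parity of p in H'
  have hH'bip : ∀ x y, (H.deleteEdges {s(a, b)}).Adj x y → (x ∈ A ↔ y ∉ A) := fun x y h =>
    hHbip x y h.1
  have hodd : ¬ Even p.length := by
    have h1 := walk_parity hH'bip p
    have h2 := hHbip a b hab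
    tauto
  -- map p to G
  have hψ : ∀ x y, (H.deleteEdges {s(a, b)}).Adj x y → G.Adj (φ x) (φ y) := by
    intro x y hxy
    obtain ⟨hHxy, hnot⟩ := hxy
    rcases φ.map_rel hHxy with h | h
    · exact h
    exfalso
    rw [SimpleGraph.fromEdgeSet_adj] at h
    have h1 : s(φ x, φ y) = s(u', v') := h.1
    have : s(φ x, φ y) = s(φ a, φ b) := h1.trans hmem.symm
    rw [Sym2.eq_iff] at this
    apply hnot
    rw [SimpleGraph.fromEdgeSet_adj]
    refine ⟨?_, hHxy.ne⟩
    show s(x, y) = s(a, b)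
    rw [Sym2.eq_iff]
    rcases this with ⟨h1, h2⟩ | ⟨h1, h2⟩
    · exact Or.inl ⟨hinj h1, hinj h2⟩
    · exact Or.inr ⟨hinj h1, hinj h2⟩
  let ψ : H.deleteEdges {s(a, b)} →g G := ⟨φ, fun h => hψ _ _ h⟩
  have hq := walk_parity hGbip (p.map ψ)
  rw [SimpleGraph.Walk.length_map] at hq
  have hφX : ¬ (φ a ∈ X ↔ φ b ∈ X) := by tauto
  -- identify {φ a, φ b} with {u, v}
  have : s(φ a, φ b) = s(u, v) := hmem.trans hs.symm
  rw [Sym2.eq_iff] at this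
  rcases this with ⟨h1, h2⟩ | ⟨h1, h2⟩ <;> rw [← h1, ← h2] <;> tauto

lemma process_bip {W V : Type*} (H : SimpleGraph W) (A : Set W)
    (hHbip : ∀ a b, H.Adj a b → (a ∈ A ↔ b ∉ A))
    (hinsep : InsepBip H A)
    (G : SimpleGraph V) (X : Set V)
    (hGbip : ∀ u v, G.Adj u v → (u ∈ X ↔ v ∉ X)) :
    ∀ i, ∀ u v, (bootProcess H G i).Adj u v → (u ∈ X ↔ v ∉ X) := by
  intro i
  induction i with
  | zero => exact hGbip
  | succ n ih => exact step_bip H A hHbip hinsep _ X ih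

/-- If H is a (1,1,1)-inseparable bipartite graph and G is bipartite with
bipartition (X, Xᶜ), then the final graph of the H-process on G is bipartite
with the same bipartition. -/
theorem stmt_7 {W V : Type*} (H : SimpleGraph W) (A : Set W)
    (hHbip : ∀ a b, H.Adj a b → (a ∈ A ↔ b ∉ A))
    (hinsep : InsepBip H A)
    (G : SimpleGraph V) (X : Set V)
    (hGbip : ∀ u v, G.Adj u v → (u ∈ X ↔ v ∉ X)) :
    ∀ u v, (bootClosure H G).Adj u v → (u ∈ X ↔ v ∉ X) := by
  intro u v huv
  rw [bootClosure, SimpleGraph.iSup_adj] at huv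
  obtain ⟨i, hi⟩ := huv
  exact process_bip H A hHbip hinsep G X hGbip i u v hi
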